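/- Let (Y,d) be a CAT(1) space and let P, Q, R ∈ Y with d(Q,P) < π/2 and d(R,P) < π/2. Let M = ½Q + ½R be the midpoint of the geodesic from Q to R. Then d(M,P)² + 2·cos(d(M,P)) ≤ ½·( d(Q,P)² + 2·cos(d(Q,P)) + d(R,P)² + 2·cos(d(R,P)) ). -/

import Mathlib

open scoped RealInnerProductSpace

noncomputable def sphereDist (x y : EuclideanSpace ℝ (Fin 3)) : ℝ :=
  Real.arccos ⟪x, y⟫

open Classical in
noncomputable def sphereInterp (x y : EuclideanSpace ℝ (Fin 3)) (t : ℝ) :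
    EuclideanSpace ℝ (Fin 3) :=
  if Real.sin (sphereDist x y) = 0 then x
  else (Real.sin ((1 - t) * sphereDist x y) / Real.sin (sphereDist x y)) • x
     + (Real.sin (t * sphereDist x y) / Real.sin (sphereDist x y)) • y

/-- A CAT(1) structure on a complete metric space `Y`: every pair of points at
distance `< π` is joined by a constant-speed minimizing geodesic
`t ↦ interp P Q t` (the point `(1-t)P + tQ`, at distance `t·d(P,Q)` from `P`),
and every geodesic triangle of perimeter `< 2π` satisfies the CAT(1)
comparison inequality with respect to any comparison triangle on the unit
sphere `S² ⊂ ℝ³` (with the angular metric). -/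
structure CAT1Space (Y : Type*) [MetricSpace Y] [CompleteSpace Y] where
  interp : Y → Y → ℝ → Y
  interp_zero : ∀ P Q : Y, dist P Q < Real.pi → interp P Q 0 = P
  interp_one : ∀ P Q : Y, dist P Q < Real.pi → interp P Q 1 = Q
  interp_dist : ∀ P Q : Y, dist P Q < Real.pi →
    ∀ s t : ℝ, s ∈ Set.Icc (0:ℝ) 1 → t ∈ Set.Icc (0:ℝ) 1 →
      dist (interp P Q s) (interp P Q t) = |s - t| * dist P Q
  comparison : ∀ P Q R : Y,
    dist P Q + dist Q R + dist R P < 2 * Real.pi →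
    ∀ p q r : EuclideanSpace ℝ (Fin 3), ‖p‖ = 1 → ‖q‖ = 1 → ‖r‖ = 1 →
      sphereDist p q = dist P Q → sphereDist q r = dist Q R →
      sphereDist r p = dist R P →
      ∀ s t : ℝ, s ∈ Set.Icc (0:ℝ) 1 → t ∈ Set.Icc (0:ℝ) 1 →
        dist (interp P Q t) (interp R Q s) ≤
          sphereDist (sphereInterp p q t) (sphereInterp r q s)

/-! Compare the triangle `QRP` with a triangle `pqr` on `S²` having the same side lengths
`a = d(Q,R)`, `b = d(R,P)`, `c = d(P,Q)`. On the sphere the median from `r` to the midpoint `m`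
of `pq` satisfies `2 cos (a/2) cos d(m,r) = cos b + cos c = 2 cos ((b+c)/2) cos ((b-c)/2)`, and
`|b - c| ≤ a` gives `d(m,r) ≤ (b+c)/2`; by CAT(1) comparison so is `d(M,P)`. The claim follows
because `s ↦ s² + 2 cos s` is nondecreasing on `[0, ∞)` (its derivative is `2s - 2 sin s`) and
convex (its second derivative is `2 - 2 cos s`).
-/

open Real InnerProductGeometry

theorem hasDerivAt_sq_add_two_mul_cos (s : ℝ) :
    HasDerivAt (fun s : ℝ => s ^ 2 + 2 * cos s) (2 * s - 2 * sin s) s :=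
  ((hasDerivAt_pow 2 s).add ((hasDerivAt_cos s).const_mul 2)).congr_deriv (by ring)

theorem monotoneOn_sq_add_two_mul_cos :
    MonotoneOn (fun s : ℝ => s ^ 2 + 2 * cos s) (Set.Ici 0) := by
  refine monotoneOn_of_deriv_nonneg (convex_Ici 0)
    (fun s _ => (hasDerivAt_sq_add_two_mul_cos s).continuousAt.continuousWithinAt)
    (fun s _ => (hasDerivAt_sq_add_two_mul_cos s).differentiableAt.differentiableWithinAt)
    fun s hs => ?_
  rw [interior_Ici, Set.mem_Ioi] at hs
  rw [(hasDerivAt_sq_add_two_mul_cos s).deriv]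
  linarith [sin_le hs.le]

theorem convexOn_sq_add_two_mul_cos :
    ConvexOn ℝ Set.univ (fun s : ℝ => s ^ 2 + 2 * cos s) := by
  have hderiv : deriv (fun s : ℝ => s ^ 2 + 2 * cos s) = fun s => 2 * s - 2 * sin s :=
    funext fun s => (hasDerivAt_sq_add_two_mul_cos s).deriv
  refine convexOn_univ_of_deriv2_nonneg (by fun_prop) (by rw [hderiv]; fun_prop) fun s => ?_
  have hderiv2 : HasDerivAt (fun s : ℝ => 2 * s - 2 * sin s) (2 - 2 * cos s) s :=
    (((hasDerivAt_id s).const_mul 2).sub ((hasDerivAt_sin s).const_mul 2)).congr_deriv (by ring)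
  rw [Function.iterate_succ_apply, Function.iterate_one, hderiv, hderiv2.deriv]
  linarith [cos_le_one s]

theorem sq_add_two_mul_cos_add_div_two_le (b c : ℝ) :
    ((b + c) / 2) ^ 2 + 2 * cos ((b + c) / 2) ≤
      (b ^ 2 + 2 * cos b + (c ^ 2 + 2 * cos c)) / 2 := by
  have := convexOn_sq_add_two_mul_cos.2 (Set.mem_univ b) (Set.mem_univ c)
    (by norm_num : (0 : ℝ) ≤ 1 / 2) (by norm_num : (0 : ℝ) ≤ 1 / 2) (by norm_num)
  simp only [smul_eq_mul] at this
  rw [show (b + c) / 2 = 1 / 2 * b + 1 / 2 * c by ring]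
  linarith

theorem abs_cos_sub_cos_mul_cos_le {a b c : ℝ} (hb : b ∈ Set.Icc 0 π) (hac : |a - c| ≤ b)
    (hb_le : b ≤ a + c) (hper : a + b + c ≤ 2 * π) :
    |cos b - cos a * cos c| ≤ sin a * sin c := by
  have hupper : cos b ≤ cos (|a - c|) :=
    cos_le_cos_of_nonneg_of_le_pi (abs_nonneg _) hb.2 hac
  have hlower : cos (a + c) ≤ cos b := by
    rcases le_total (a + c) π with h | h
    · exact cos_le_cos_of_nonneg_of_le_pi hb.1 h hb_le
    · rw [← cos_two_pi_sub]
      exact cos_le_cos_of_nonneg_of_le_pi hb.1 (by linarith) (by linarith)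
  rw [cos_abs, cos_sub] at hupper
  rw [cos_add] at hlower
  exact abs_le.2 ⟨by linarith, by linarith⟩

theorem exists_mul_cos_eq {x s : ℝ} (h : |x| ≤ s) : ∃ θ, s * cos θ = x := by
  rcases (abs_nonneg x |>.trans h).eq_or_lt with hs | hs
  · refine ⟨π / 2, ?_⟩
    rw [← hs] at h
    rw [cos_pi_div_two, mul_zero, eq_comm, ← abs_nonpos_iff]
    exact h
  · obtain ⟨hlo, hhi⟩ := abs_le.1 h
    refine ⟨arccos (x / s), ?_⟩
    rw [cos_arccos ((le_div_iff₀ hs).2 (by linarith)) ((div_le_one hs).2 hhi)]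
    field_simp

theorem inner_three (x₁ x₂ x₃ y₁ y₂ y₃ : ℝ) :
    ⟪!₂[x₁, x₂, x₃], !₂[y₁, y₂, y₃]⟫ = x₁ * y₁ + x₂ * y₂ + x₃ * y₃ := by
  simp [PiLp.inner_apply, Fin.sum_univ_three]
  ring

theorem norm_eq_one_of_inner_self {E : Type*} [NormedAddCommGroup E] [InnerProductSpace ℝ E]
    {x : E} (h : ⟪x, x⟫ = 1) : ‖x‖ = 1 := by
  rw [norm_eq_sqrt_real_inner, h, sqrt_one]

theorem sphereInterp_zero (x y : EuclideanSpace ℝ (Fin 3)) : sphereInterp x y 0 = x := by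
  unfold sphereInterp
  split_ifs with h
  · rfl
  · simp [div_self h]

theorem sphereDist_eq_angle {x y : EuclideanSpace ℝ (Fin 3)} (hx : ‖x‖ = 1) (hy : ‖y‖ = 1) :
    sphereDist x y = angle x y := by
  rw [sphereDist, angle, hx, hy, mul_one, div_one]

theorem sphereDist_comm (x y : EuclideanSpace ℝ (Fin 3)) : sphereDist x y = sphereDist y x := by
  rw [sphereDist, sphereDist, real_inner_comm]

theorem sphereDist_eq_of_inner_eq_cos {x y : EuclideanSpace ℝ (Fin 3)} {a : ℝ}
    (ha : a ∈ Set.Icc 0 π) (h : ⟪x, y⟫ = cos a) : sphereDist x y = a := by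
  rw [sphereDist, h, arccos_cos ha.1 ha.2]

theorem cos_sphereDist {x y : EuclideanSpace ℝ (Fin 3)} (hx : ‖x‖ = 1) (hy : ‖y‖ = 1) :
    cos (sphereDist x y) = ⟪x, y⟫ := by
  rw [sphereDist_eq_angle hx hy, cos_angle, hx, hy, mul_one, div_one]

theorem sphereDist_le_add {x y z : EuclideanSpace ℝ (Fin 3)} (hx : ‖x‖ = 1) (hy : ‖y‖ = 1)
    (hz : ‖z‖ = 1) : sphereDist x z ≤ sphereDist x y + sphereDist y z := by
  rw [sphereDist_eq_angle hx hz, sphereDist_eq_angle hx hy, sphereDist_eq_angle hy hz]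
  exact angle_le_angle_add_angle x y z

theorem exists_sphere_triangle {a b c : ℝ} (ha : a ∈ Set.Icc 0 π) (hb : b ∈ Set.Icc 0 π)
    (hc : c ∈ Set.Icc 0 π) (hac : |a - c| ≤ b) (hb_le : b ≤ a + c) (hper : a + b + c ≤ 2 * π) :
    ∃ p q r : EuclideanSpace ℝ (Fin 3), ‖p‖ = 1 ∧ ‖q‖ = 1 ∧ ‖r‖ = 1 ∧
      sphereDist p q = a ∧ sphereDist q r = b ∧ sphereDist r p = c := by
  -- `θ` is the angle at `p` prescribed by the spherical law of cosines.
  obtain ⟨θ, hθ⟩ := exists_mul_cos_eq (abs_cos_sub_cos_mul_cos_le hb hac hb_le hper)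
  refine ⟨!₂[1, 0, 0], !₂[cos a, sin a, 0], !₂[cos c, sin c * cos θ, sin c * sin θ],
    norm_eq_one_of_inner_self ?_, norm_eq_one_of_inner_self ?_, norm_eq_one_of_inner_self ?_,
    ?_, ?_, ?_⟩
  · rw [inner_three]; ring
  · rw [inner_three]; nlinarith [sin_sq_add_cos_sq a]
  · rw [inner_three]; nlinarith [sin_sq_add_cos_sq c, sin_sq_add_cos_sq θ]
  · exact sphereDist_eq_of_inner_eq_cos ha (by rw [inner_three]; ring)
  · exact sphereDist_eq_of_inner_eq_cos hb (by rw [inner_three]; linear_combination hθ)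
  · exact sphereDist_eq_of_inner_eq_cos hc (by rw [inner_three]; ring)

theorem two_mul_cos_half_mul_cos_add_div_two_le {a b c : ℝ} (hb : 0 ≤ b) (hc : 0 ≤ c)
    (hbc : b + c ≤ π) (hbca : |b - c| ≤ a) (ha : a ≤ 2 * π) :
    2 * cos (a / 2) * cos ((b + c) / 2) ≤ cos b + cos c := by
  have hcos_half : cos (a / 2) ≤ cos ((b - c) / 2) := by
    rw [← cos_abs ((b - c) / 2)]
    refine cos_le_cos_of_nonneg_of_le_pi (abs_nonneg _) (by linarith) ?_
    rw [abs_div, abs_two]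
    linarith
  have hcos_nonneg : 0 ≤ cos ((b + c) / 2) :=
    cos_nonneg_of_mem_Icc ⟨by linarith [pi_pos], by linarith⟩
  rw [cos_add_cos]
  nlinarith [mul_le_mul_of_nonneg_right hcos_half hcos_nonneg]

theorem two_mul_cos_half_mul_inner_sphereInterp_half {p q : EuclideanSpace ℝ (Fin 3)}
    (r : EuclideanSpace ℝ (Fin 3)) (hpq : sin (sphereDist p q) ≠ 0) :
    2 * cos (sphereDist p q / 2) * ⟪sphereInterp p q (1 / 2), r⟫ = ⟪p, r⟫ + ⟪q, r⟫ := by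
  set a := sphereDist p q
  have hsin : sin a = 2 * sin (a / 2) * cos (a / 2) := by
    rw [← sin_two_mul, mul_div_cancel₀ a two_ne_zero]
  have hsin_half : sin (a / 2) ≠ 0 := right_ne_zero_of_mul (left_ne_zero_of_mul (hsin ▸ hpq))
  have hcos_half : cos (a / 2) ≠ 0 := right_ne_zero_of_mul (hsin ▸ hpq)
  rw [sphereInterp, if_neg hpq, show (1 - 1 / 2) * a = a / 2 by ring,
    show 1 / 2 * a = a / 2 by ring, inner_add_left, real_inner_smul_left, real_inner_smul_left,
    hsin]
  field_simp

theorem sphereDist_sphereInterp_half_le {p q r : EuclideanSpace ℝ (Fin 3)} (hp : ‖p‖ = 1)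
    (hq : ‖q‖ = 1) (hr : ‖r‖ = 1) (hpq : sphereDist p q < π)
    (hqrp : sphereDist q r + sphereDist r p ≤ π) :
    sphereDist (sphereInterp p q (1 / 2)) r ≤ (sphereDist q r + sphereDist r p) / 2 := by
  set a := sphereDist p q with ha_def
  set b := sphereDist q r
  set c := sphereDist r p
  have hb_le : b ≤ a + c := sphereDist_le_add hq hp hr |>.trans_eq <| by
    rw [sphereDist_comm q p, sphereDist_comm p r]
  have hc_le : c ≤ b + a := sphereDist_le_add hr hq hp |>.trans_eq <| by
    rw [sphereDist_comm r q, sphereDist_comm q p]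
  have ha0 : 0 ≤ a := arccos_nonneg _
  have hb0 : 0 ≤ b := arccos_nonneg _
  have hc0 : 0 ≤ c := arccos_nonneg _
  rcases ha0.eq_or_lt with ha | ha
  · rw [sphereInterp, if_pos (by rw [← ha_def, ← ha, sin_zero]), sphereDist_comm]
    linarith
  have hsin : sin a ≠ 0 := (sin_pos_of_pos_of_lt_pi ha hpq).ne'
  have hcos_half : 0 < cos (a / 2) := cos_pos_of_mem_Ioo ⟨by linarith [pi_pos], by linarith⟩
  have hinner : cos ((b + c) / 2) ≤ ⟪sphereInterp p q (1 / 2), r⟫ := by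
    have hmid := two_mul_cos_half_mul_inner_sphereInterp_half r hsin
    rw [← cos_sphereDist hp hr, sphereDist_comm p r, ← cos_sphereDist hq hr] at hmid
    have := two_mul_cos_half_mul_cos_add_div_two_le (a := a) hb0 hc0 hqrp
      (abs_sub_le_iff.2 ⟨by linarith, by linarith⟩) (by linarith [pi_pos])
    nlinarith
  calc sphereDist (sphereInterp p q (1 / 2)) r ≤ arccos (cos ((b + c) / 2)) :=
        arccos_le_arccos hinner
    _ = (b + c) / 2 := arccos_cos (by linarith) (by linarith)

theorem CAT1Space.dist_interp_half_le {Y : Type*} [MetricSpace Y] [CompleteSpace Y]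
    (H : CAT1Space Y) {P Q R : Y} (h : dist Q P + dist R P < π) :
    dist (H.interp Q R (1 / 2)) P ≤ (dist Q P + dist R P) / 2 := by
  have hQR : dist Q R ≤ dist P Q + dist R P := by
    linarith [dist_triangle Q P R, dist_comm Q P, dist_comm P R]
  have hRP : dist R P ≤ dist Q R + dist P Q := by
    linarith [dist_triangle R Q P, dist_comm R Q, dist_comm Q P]
  have hPQ : dist P Q ≤ dist Q R + dist R P := by
    linarith [dist_triangle P R Q, dist_comm P R, dist_comm R Q]
  rw [dist_comm Q P] at h ⊢
  obtain ⟨p, q, r, hp, hq, hr, hpq, hqr, hrp⟩ :=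
    exists_sphere_triangle (a := dist Q R) (b := dist R P) (c := dist P Q)
      ⟨dist_nonneg, by linarith⟩ ⟨dist_nonneg, by linarith⟩ ⟨dist_nonneg, by linarith⟩
      (abs_sub_le_iff.2 ⟨by linarith, by linarith⟩) (by linarith) (by linarith)
  have hcomp := H.comparison Q R P (by linarith) p q r hp hq hr hpq hqr hrp 0 (1 / 2)
    (by norm_num) (by norm_num)
  rw [H.interp_zero P R (by linarith [dist_comm P R]), sphereInterp_zero] at hcomp
  calc dist (H.interp Q R (1 / 2)) P ≤ sphereDist (sphereInterp p q (1 / 2)) r := hcomp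
    _ ≤ (sphereDist q r + sphereDist r p) / 2 :=
        sphereDist_sphereInterp_half_le hp hq hr (by linarith) (by linarith)
    _ = (dist P Q + dist R P) / 2 := by rw [hqr, hrp, add_comm]

/-- Midpoint convexity of `s ↦ s² + 2cos s` along distances in a CAT(1)
space. -/
theorem statement6 (Y : Type*) [MetricSpace Y] [CompleteSpace Y]
    (H : CAT1Space Y) (P Q R : Y)
    (hQP : dist Q P < Real.pi / 2) (hRP : dist R P < Real.pi / 2) :
    dist (H.interp Q R (1 / 2)) P ^ 2 +
        2 * Real.cos (dist (H.interp Q R (1 / 2)) P) ≤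
      (1 / 2) * (dist Q P ^ 2 + 2 * Real.cos (dist Q P) +
        dist R P ^ 2 + 2 * Real.cos (dist R P)) := by
  have hmid := H.dist_interp_half_le (by linarith : dist Q P + dist R P < π)
  have hmono := monotoneOn_sq_add_two_mul_cos (Set.mem_Ici.2 dist_nonneg)
    (Set.mem_Ici.2 (by positivity)) hmid
  have hconv := sq_add_two_mul_cos_add_div_two_le (dist Q P) (dist R P)
  simp only at hmono
  linarith
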